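/- Let n > m_1 > 1 be coprime integers, let m_2 be the integer with 0 < m_2 < n and m_1·m_2 ≡ 1 (mod n), and set c = (m_1·m_2 − 1)/n. Let H = {(u_1,u_2) ∈ ℕ² : u_1 + m_1·u_2 ≡ 0 (mod n)} and E = {(n,0),(0,n)}, and assume c divides both m_1 − 1 and m_2 − 1 (so H is an AG semigroup). Then H has a unique Ulrich element: there is exactly one minimal generator v of ω_H such that for every minimal generator a ≠ v of ω_H there exist a minimal generator a' of ω_H and b ∈ E with a + a' = v + b; moreover this v satisfies deg v < deg u for every minimal generator u ≠ v of ω_H, where deg(x_1,x_2) = x_1 + x_2. -/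
import Mathlib


open scoped Classical

namespace AGpaper

/-- The degree of an integer vector: sum of coordinates. -/
def degZ {d : ℕ} (x : Fin d → ℤ) : ℤ := ∑ i, x i

/-- An orthogonal semigroup of order `m` in `ℕ^d`. -/
def IsOrthogonal (d m : ℕ) (H : AddSubmonoid (Fin d → ℤ)) : Prop :=
  H.FG ∧
  (∀ x ∈ H, ∀ i, 0 ≤ x i) ∧
  (∀ i : Fin d, Pi.single i (m : ℤ) ∈ H) ∧
  (∃ n : ℕ, 0 < n ∧ ∀ x ∈ H, ∀ i, (m : ℤ) ∣ (n : ℤ) * x i) ∧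
  (∀ i : Fin d, ∀ m' : ℕ, 0 < m' → m' < m → Pi.single i (m' : ℤ) ∉ H)

/-- The Apéry set of an orthogonal semigroup w.r.t. its extreme rays `m eᵢ`. -/
def apery (d m : ℕ) (H : AddSubmonoid (Fin d → ℤ)) : Set (Fin d → ℤ) :=
  {x | x ∈ H ∧ ∀ i : Fin d, x - Pi.single i (m : ℤ) ∉ H}

/-- The socle: maximal elements of the Apéry set with respect to `≤_H`. -/
def soc (d m : ℕ) (H : AddSubmonoid (Fin d → ℤ)) : Set (Fin d → ℤ) :=
  {x | x ∈ apery d m H ∧ ∀ y ∈ apery d m H, y - x ∈ H → x = y}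

/-- `ω_H = {-w + m e₁ + ⋯ + m e_d + h : w ∈ Soc(H,E), h ∈ H}`. -/
def omegaH (d m : ℕ) (H : AddSubmonoid (Fin d → ℤ)) : Set (Fin d → ℤ) :=
  {x | ∃ w ∈ soc d m H, ∃ h ∈ H, x = -w + (fun _ => (m : ℤ)) + h}

/-- Normality of a submonoid of `ℤ^d`. -/
def IsNormalSg (d : ℕ) (H : AddSubmonoid (Fin d → ℤ)) : Prop :=
  ∀ g ∈ AddSubgroup.closure (H : Set (Fin d → ℤ)),
    (∃ n : ℕ, 1 ≤ n ∧ n • g ∈ H) → g ∈ H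

/-- An AG witness `w ∈ Soc(H,E)`. -/
def AGwitness (d m : ℕ) (H : AddSubmonoid (Fin d → ℤ)) (w : Fin d → ℤ) : Prop :=
  w ∈ soc d m H ∧
  (∀ h ∈ apery d m H, ((h ∈ soc d m H ∧ h ≠ w) ↔ w - h ∉ H)) ∧
  (∀ h ∈ soc d m H, h ≠ w →
    ∃ i : Fin d, ∃ h' ∈ soc d m H, h + h' = w + Pi.single i (m : ℤ))

/-- `x` is a minimal generator of `ω_H`. -/
def minGen (d m : ℕ) (H : AddSubmonoid (Fin d → ℤ)) (x : Fin d → ℤ) : Prop :=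
  x ∈ omegaH d m H ∧ ∀ h ∈ H, h ≠ 0 → x - h ∉ omegaH d m H

/-- The semigroup `H = {(u₁,u₂) ∈ ℕ² : u₁ + m₁·u₂ ≡ 0 (mod n)}` as a submonoid of `ℤ²`. -/
def Hnm (n m₁ : ℕ) : AddSubmonoid (Fin 2 → ℤ) where
  carrier := {x | (∀ i, 0 ≤ x i) ∧ (n : ℤ) ∣ (x 0 + (m₁ : ℤ) * x 1)}
  zero_mem' := by
    refine ⟨fun i => le_refl 0, ?_⟩
    simp
  add_mem' := by
    rintro a b ⟨ha1, ha2⟩ ⟨hb1, hb2⟩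
    refine ⟨fun i => add_nonneg (ha1 i) (hb1 i), ?_⟩
    have h : (a + b) 0 + (m₁ : ℤ) * (a + b) 1 =
        (a 0 + (m₁ : ℤ) * a 1) + (b 0 + (m₁ : ℤ) * b 1) := by
      simp [Pi.add_apply]; ring
    rw [h]
    exact dvd_add ha2 hb2

/-- `v` is an Ulrich element of the rank-2 normal semigroup `H` (of order `n`): a minimal
generator of `ω_H` such that every other minimal generator `a` satisfies `a + a' = v + b`
for some minimal generator `a'` and extreme ray `b`. -/
def IsUlrich2 (n : ℕ) (H : AddSubmonoid (Fin 2 → ℤ)) (v : Fin 2 → ℤ) : Prop :=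
  minGen 2 n H v ∧
  ∀ a : Fin 2 → ℤ, minGen 2 n H a → a ≠ v →
    ∃ a' : Fin 2 → ℤ, minGen 2 n H a' ∧ ∃ i : Fin 2, a + a' = v + Pi.single i (n : ℤ)

lemma mem_Hnm {n m₁ : ℕ} {x : Fin 2 → ℤ} :
    x ∈ Hnm n m₁ ↔ 0 ≤ x 0 ∧ 0 ≤ x 1 ∧ (n : ℤ) ∣ (x 0 + (m₁ : ℤ) * x 1) := by
  constructor
  · rintro ⟨h1, h2⟩; exact ⟨h1 0, h1 1, h2⟩
  · rintro ⟨h0, h1, h2⟩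
    exact ⟨fun i => by fin_cases i <;> assumption, h2⟩

lemma vec_ext {x y : Fin 2 → ℤ} (h0 : x 0 = y 0) (h1 : x 1 = y 1) : x = y := by
  funext i; fin_cases i <;> assumption

lemma rep_eq {N x r : ℤ} (hd : N ∣ x - r) (h1 : 1 ≤ x) (h2 : x ≤ N) (h3 : 1 ≤ r)
    (h4 : r < N) : x = r := by
  obtain ⟨t, ht⟩ := hd
  have hN : 0 < N := by linarith
  rcases lt_trichotomy t 0 with h | h | h
  · have h' : t ≤ -1 := by omega
    have := mul_le_mul_of_nonneg_left h' (le_of_lt hN)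
    nlinarith
  · subst h; simp at ht; linarith
  · have h' : 1 ≤ t := by omega
    have := mul_le_mul_of_nonneg_left h' (le_of_lt hN)
    nlinarith

lemma rep_le {N a r : ℤ} (hd : N ∣ a - r) (ha : 0 ≤ a) (h3 : 0 < r) (h4 : r < N) :
    r ≤ a := by
  obtain ⟨t, ht⟩ := hd
  have hN : 0 < N := by linarith
  rcases lt_trichotomy t 0 with h | h | h
  · have h' : t ≤ -1 := by omega
    have := mul_le_mul_of_nonneg_left h' (le_of_lt hN)
    nlinarith
  · subst h; simp at ht; linarith
  · have h' : 1 ≤ t := by omega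
    have := mul_le_mul_of_nonneg_left h' (le_of_lt hN)
    nlinarith


lemma mem_apery_iff {n m₁ : ℕ} {x : Fin 2 → ℤ} :
    x ∈ apery 2 n (Hnm n m₁) ↔
      (0 ≤ x 0 ∧ 0 ≤ x 1 ∧ (n : ℤ) ∣ (x 0 + (m₁ : ℤ) * x 1)) ∧
        x 0 < n ∧ x 1 < n := by
  rw [apery, Set.mem_setOf_eq, mem_Hnm]
  constructor
  · rintro ⟨⟨h0, h1, hd⟩, hap⟩
    refine ⟨⟨h0, h1, hd⟩, ?_, ?_⟩
    · by_contra hc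
      push_neg at hc
      apply hap 0
      rw [mem_Hnm]
      have e0 : (x - Pi.single (0:Fin 2) ((n:ℕ):ℤ) : Fin 2 → ℤ) 0 = x 0 - n := by
        simp [Pi.single_apply]
      have e1 : (x - Pi.single (0:Fin 2) ((n:ℕ):ℤ) : Fin 2 → ℤ) 1 = x 1 := by
        simp [Pi.single_apply]
      rw [e0, e1]
      refine ⟨by linarith, h1, ?_⟩
      have he : x 0 - n + (m₁:ℤ) * x 1 = (x 0 + (m₁:ℤ) * x 1) - n := by ring
      rw [he]
      exact dvd_sub hd ⟨1, by ring⟩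
    · by_contra hc
      push_neg at hc
      apply hap 1
      rw [mem_Hnm]
      have e0 : (x - Pi.single (1:Fin 2) ((n:ℕ):ℤ) : Fin 2 → ℤ) 0 = x 0 := by
        simp [Pi.single_apply]
      have e1 : (x - Pi.single (1:Fin 2) ((n:ℕ):ℤ) : Fin 2 → ℤ) 1 = x 1 - n := by
        simp [Pi.single_apply]
      rw [e0, e1]
      refine ⟨h0, by linarith, ?_⟩
      have he : x 0 + (m₁:ℤ) * (x 1 - n) = (x 0 + (m₁:ℤ) * x 1) - m₁ * n := by ring
      rw [he]
      exact dvd_sub hd ⟨m₁, by ring⟩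
  · rintro ⟨⟨h0, h1, hd⟩, hb0, hb1⟩
    refine ⟨⟨h0, h1, hd⟩, fun i => ?_⟩
    fin_cases i
    · intro hmem
      have := (mem_Hnm.mp hmem).1
      simp [Pi.single_apply] at this
      linarith
    · intro hmem
      have := (mem_Hnm.mp hmem).2.1
      simp [Pi.single_apply] at this
      linarith

lemma exists_soc_above {n m₁ : ℕ} :
    ∀ (d : ℕ) (w : Fin 2 → ℤ), w ∈ apery 2 n (Hnm n m₁) →
      2 * (n:ℤ) - (w 0 + w 1) ≤ d →
      ∃ s ∈ soc 2 n (Hnm n m₁), s - w ∈ Hnm n m₁ := by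
  intro d
  induction d with
  | zero =>
    intro w hw hb
    obtain ⟨⟨h0, h1, _⟩, hb0, hb1⟩ := mem_apery_iff.mp hw
    exfalso
    simp at hb
    linarith
  | succ d ih =>
    intro w hw hb
    by_cases hs : w ∈ soc 2 n (Hnm n m₁)
    · refine ⟨w, hs, ?_⟩
      simpa using (Hnm n m₁).zero_mem
    · rw [soc, Set.mem_setOf_eq] at hs
      push_neg at hs
      obtain ⟨y, hy, hyw, hne⟩ := hs hw
      have h0 : 0 ≤ y 0 - w 0 := by
        have := (mem_Hnm.mp hyw).1; simpa using this
      have h1 : 0 ≤ y 1 - w 1 := by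
        have := (mem_Hnm.mp hyw).2.1; simpa using this
      have hsum : w 0 + w 1 + 1 ≤ y 0 + y 1 := by
        by_contra hc
        push_neg at hc
        have e0 : y 0 = w 0 := by linarith
        have e1 : y 1 = w 1 := by linarith
        exact hne (vec_ext e0.symm e1.symm)
      obtain ⟨s, hsoc, hsy⟩ := ih y hy (by push_cast at hb ⊢; linarith)
      refine ⟨s, hsoc, ?_⟩
      have := (Hnm n m₁).add_mem hsy hyw
      rwa [sub_add_sub_cancel] at this


lemma mem_omegaH {n m₁ : ℕ} (hn : 0 < n) {x : Fin 2 → ℤ} :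
    x ∈ omegaH 2 n (Hnm n m₁) ↔
      1 ≤ x 0 ∧ 1 ≤ x 1 ∧ (n : ℤ) ∣ (x 0 + (m₁ : ℤ) * x 1) := by
  have hN : (0:ℤ) < n := by exact_mod_cast hn
  constructor
  · rintro ⟨w, hw, h, hh, rfl⟩
    obtain ⟨⟨hw0, hw1, hwd⟩, hwb0, hwb1⟩ := mem_apery_iff.mp hw.1
    obtain ⟨hh0, hh1, hhd⟩ := mem_Hnm.mp hh
    have e0 : (-w + (fun _ => ((n:ℕ):ℤ)) + h : Fin 2 → ℤ) 0 = -w 0 + n + h 0 := rfl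
    have e1 : (-w + (fun _ => ((n:ℕ):ℤ)) + h : Fin 2 → ℤ) 1 = -w 1 + n + h 1 := rfl
    rw [e0, e1]
    refine ⟨by linarith, by linarith, ?_⟩
    have he : -w 0 + (n:ℤ) + h 0 + (m₁:ℤ) * (-w 1 + n + h 1)
        = ((n:ℤ) + m₁ * n) - (w 0 + m₁ * w 1) + (h 0 + m₁ * h 1) := by ring
    rw [he]
    exact dvd_add (dvd_sub ⟨1 + m₁, by ring⟩ hwd) hhd
  · rintro ⟨h0, h1, hd⟩
    set w : Fin 2 → ℤ := ![(-(x 0)) % n, (-(x 1)) % n] with hwdef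
    have hw0 : w 0 = (-(x 0)) % n := rfl
    have hw1 : w 1 = (-(x 1)) % n := rfl
    have hNne : ((n:ℕ):ℤ) ≠ 0 := by exact_mod_cast hn.ne'
    have hd0 : (n:ℤ) ∣ w 0 + x 0 := by
      refine ⟨-((-(x 0)) / n), ?_⟩
      rw [hw0, Int.emod_def]; ring
    have hd1 : (n:ℤ) ∣ w 1 + x 1 := by
      refine ⟨-((-(x 1)) / n), ?_⟩
      rw [hw1, Int.emod_def]; ring
    have hwn0 : 0 ≤ w 0 := Int.emod_nonneg _ hNne
    have hwn1 : 0 ≤ w 1 := Int.emod_nonneg _ hNne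
    have hwb0 : w 0 < n := Int.emod_lt_of_pos _ hN
    have hwb1 : w 1 < n := Int.emod_lt_of_pos _ hN
    have hwap : w ∈ apery 2 n (Hnm n m₁) := by
      rw [mem_apery_iff]
      refine ⟨⟨hwn0, hwn1, ?_⟩, hwb0, hwb1⟩
      have he : w 0 + (m₁:ℤ) * w 1
          = (w 0 + x 0) + (m₁:ℤ) * (w 1 + x 1) - (x 0 + m₁ * x 1) := by ring
      rw [he]
      exact dvd_sub (dvd_add hd0 (Dvd.dvd.mul_left hd1 _)) hd
    obtain ⟨s, hsoc, hsw⟩ := exists_soc_above (2 * n) w hwap (by push_cast; linarith)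
    have hsoc' := hsoc
    rw [soc, Set.mem_setOf_eq] at hsoc'
    obtain ⟨hs0, hs1, _⟩ := mem_Hnm.mp hsw
    have hs0' : w 0 ≤ s 0 := by
      have : (s - w) 0 = s 0 - w 0 := rfl
      rw [this] at hs0; linarith
    have hs1' : w 1 ≤ s 1 := by
      have : (s - w) 1 = s 1 - w 1 := rfl
      rw [this] at hs1; linarith
    have hge0 : (n:ℤ) ≤ w 0 + x 0 := Int.le_of_dvd (by linarith) hd0
    have hge1 : (n:ℤ) ≤ w 1 + x 1 := Int.le_of_dvd (by linarith) hd1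
    obtain ⟨hsap, -⟩ := hsoc'
    obtain ⟨⟨_, _, hsdvd⟩, _, _⟩ := mem_apery_iff.mp hsap
    refine ⟨s, hsoc, (fun i => x i + s i - n), ?_, ?_⟩
    · rw [mem_Hnm]
      refine ⟨by linarith, by linarith, ?_⟩
      have he : x 0 + s 0 - (n:ℤ) + (m₁:ℤ) * (x 1 + s 1 - n)
          = (x 0 + (m₁:ℤ) * x 1) + (s 0 + (m₁:ℤ) * s 1) - ((n:ℤ) + m₁ * n) := by
        ring
      exact he ▸ dvd_sub (dvd_add hd hsdvd) ⟨1 + m₁, by ring⟩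
    · refine vec_ext ?_ ?_
      · show x 0 = -s 0 + (n:ℤ) + (x 0 + s 0 - n)
        ring
      · show x 1 = -s 1 + (n:ℤ) + (x 1 + s 1 - n)
        ring

lemma minGen_iff' {n m₁ : ℕ} (hn : 0 < n) {x : Fin 2 → ℤ} :
    minGen 2 n (Hnm n m₁) x ↔
      (1 ≤ x 0 ∧ 1 ≤ x 1 ∧ (n:ℤ) ∣ (x 0 + (m₁:ℤ) * x 1)) ∧
      ∀ h ∈ Hnm n m₁, h ≠ 0 → (x 0 - h 0 < 1 ∨ x 1 - h 1 < 1) := by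
  constructor
  · rintro ⟨hx, hmin⟩
    obtain ⟨h0, h1, hd⟩ := (mem_omegaH hn).mp hx
    refine ⟨⟨h0, h1, hd⟩, fun h hh hne => ?_⟩
    by_contra hc
    push_neg at hc
    obtain ⟨c0, c1⟩ := hc
    apply hmin h hh hne
    rw [mem_omegaH hn]
    obtain ⟨hh0, hh1, hhd⟩ := mem_Hnm.mp hh
    refine ⟨c0, c1, ?_⟩
    have he : (x - h : Fin 2 → ℤ) 0 + (m₁:ℤ) * (x - h : Fin 2 → ℤ) 1
        = (x 0 + (m₁:ℤ) * x 1) - (h 0 + (m₁:ℤ) * h 1) := by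
      show x 0 - h 0 + (m₁:ℤ) * (x 1 - h 1) = _
      ring
    rw [he]
    exact dvd_sub hd hhd
  · rintro ⟨⟨h0, h1, hd⟩, hbox⟩
    refine ⟨(mem_omegaH hn).mpr ⟨h0, h1, hd⟩, fun h hh hne hcon => ?_⟩
    obtain ⟨c0, c1, -⟩ := (mem_omegaH hn).mp hcon
    have e0 : (x - h : Fin 2 → ℤ) 0 = x 0 - h 0 := rfl
    have e1 : (x - h : Fin 2 → ℤ) 1 = x 1 - h 1 := rfl
    rw [e0] at c0; rw [e1] at c1
    rcases hbox h hh hne with hc | hc <;> linarith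

lemma mingen_iff {n m₁ : ℕ} (hn : 0 < n) {A B M2 : ℤ}
    (hA : 1 ≤ A) (hB : 1 ≤ B) (hM1 : 2 ≤ (m₁:ℤ)) (hM2 : 2 ≤ M2)
    (hABN : A + (m₁:ℤ) * B = (n:ℤ)) (hM2A : M2 * A + B = (n:ℤ))
    (hdvd : (n:ℤ) ∣ (m₁:ℤ) * M2 - 1) {x : Fin 2 → ℤ} :
    minGen 2 n (Hnm n m₁) x ↔
      ((∃ k : ℤ, 1 ≤ k ∧ k ≤ B ∧ x 0 = (n:ℤ) - m₁ * k ∧ x 1 = k) ∨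
       (∃ j : ℤ, 1 ≤ j ∧ j ≤ A - 1 ∧ x 0 = j ∧ x 1 = (n:ℤ) - M2 * j)) := by
  have hN : (0:ℤ) < n := by exact_mod_cast hn
  rw [minGen_iff' hn]
  constructor
  · rintro ⟨⟨h0, h1, hd⟩, hbox⟩
    have he1mem : (![(n:ℤ), 0] : Fin 2 → ℤ) ∈ Hnm n m₁ :=
      mem_Hnm.mpr ⟨by simp, by simp, ⟨1, by simp⟩⟩
    have he1ne : (![(n:ℤ), 0] : Fin 2 → ℤ) ≠ 0 := by
      intro heq
      have := congrFun heq 0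
      simp at this
      omega
    have he2mem : (![0, (n:ℤ)] : Fin 2 → ℤ) ∈ Hnm n m₁ :=
      mem_Hnm.mpr ⟨by simp, by simp, ⟨m₁, by simp [mul_comm]⟩⟩
    have he2ne : (![0, (n:ℤ)] : Fin 2 → ℤ) ≠ 0 := by
      intro heq
      have := congrFun heq 1
      simp at this
      omega
    have hxn0 : x 0 ≤ n := by
      rcases hbox _ he1mem he1ne with hc | hc
      · simp at hc; linarith
      · simp at hc; linarith
    have hxn1 : x 1 ≤ n := by
      rcases hbox _ he2mem he2ne with hc | hc
      · simp at hc; linarith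
      · simp at hc; linarith
    by_cases hcase : x 1 ≤ B
    · left
      refine ⟨x 1, h1, hcase, ?_, rfl⟩
      have hr1 : 1 ≤ (n:ℤ) - m₁ * x 1 := by
        linarith [mul_le_mul_of_nonneg_left (show (0:ℤ) ≤ B - x 1 by linarith)
          (show (0:ℤ) ≤ (m₁:ℤ) by linarith)]
      have hr2 : (n:ℤ) - m₁ * x 1 < n := by
        linarith [mul_le_mul_of_nonneg_left (show (1:ℤ) ≤ x 1 by linarith)
          (show (0:ℤ) ≤ (m₁:ℤ) by linarith)]
      refine rep_eq ?_ h0 hxn0 hr1 hr2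
      have he : x 0 - ((n:ℤ) - m₁ * x 1) = (x 0 + (m₁:ℤ) * x 1) - n := by ring
      rw [he]
      exact dvd_sub hd ⟨1, by ring⟩
    · push_neg at hcase
      have hvmem : (![A, B] : Fin 2 → ℤ) ∈ Hnm n m₁ :=
        mem_Hnm.mpr ⟨by simp; linarith, by simp; linarith, ⟨1, by simp; linarith⟩⟩
      have hvne : (![A, B] : Fin 2 → ℤ) ≠ 0 := by
        intro heq
        have := congrFun heq 0
        simp at this
        omega
      have hx0A : x 0 ≤ A := by
        rcases hbox _ hvmem hvne with hc | hc
        · simp at hc; linarith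
        · simp at hc; linarith
      have hx0A' : x 0 ≤ A - 1 := by
        rcases lt_or_eq_of_le hx0A with hlt | heq
        · linarith
        · exfalso
          have hdvd1 : (n:ℤ) ∣ (m₁:ℤ) * (x 1 - B) := by
            have he : (m₁:ℤ) * (x 1 - B) = (x 0 + (m₁:ℤ) * x 1) - (A + (m₁:ℤ) * B) := by
              rw [heq]; ring
            rw [he, hABN]
            exact dvd_sub hd ⟨1, by ring⟩
          have hdvd2 : (n:ℤ) ∣ x 1 - B := by
            have he : x 1 - B = M2 * ((m₁:ℤ) * (x 1 - B)) - ((m₁:ℤ) * M2 - 1) * (x 1 - B) := by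
              ring
            rw [he]
            exact dvd_sub (hdvd1.mul_left _) (hdvd.mul_right _)
          have := Int.le_of_dvd (by linarith) hdvd2
          linarith
      right
      refine ⟨x 0, h0, hx0A', rfl, ?_⟩
      have hd2 : (n:ℤ) ∣ M2 * x 0 + x 1 := by
        have he : M2 * x 0 + x 1 = M2 * (x 0 + (m₁:ℤ) * x 1) - ((m₁:ℤ) * M2 - 1) * x 1 := by
          ring
        rw [he]
        exact dvd_sub (hd.mul_left _) (hdvd.mul_right _)
      have hr1 : 1 ≤ (n:ℤ) - M2 * x 0 := by
        linarith [mul_le_mul_of_nonneg_left (show (0:ℤ) ≤ A - x 0 by linarith)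
          (show (0:ℤ) ≤ M2 by linarith)]
      have hr2 : (n:ℤ) - M2 * x 0 < n := by
        linarith [mul_le_mul_of_nonneg_left (show (1:ℤ) ≤ x 0 by linarith)
          (show (0:ℤ) ≤ M2 by linarith)]
      refine rep_eq ?_ h1 hxn1 hr1 hr2
      have he : x 1 - ((n:ℤ) - M2 * x 0) = (M2 * x 0 + x 1) - n := by ring
      rw [he]
      exact dvd_sub hd2 ⟨1, by ring⟩
  · rintro (⟨k, hk1, hk2, hx0, hx1⟩ | ⟨j, hj1, hj2, hx0, hx1⟩)
    · have hx0ge : A ≤ x 0 := by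
        rw [hx0]
        linarith [mul_le_mul_of_nonneg_left (show (0:ℤ) ≤ B - k by linarith)
          (show (0:ℤ) ≤ (m₁:ℤ) by linarith)]
      refine ⟨⟨by linarith, by omega, ?_⟩, ?_⟩
      · rw [hx0, hx1]
        exact ⟨1, by ring⟩
      · intro h hh hne
        by_contra hc
        push_neg at hc
        obtain ⟨c0, c1⟩ := hc
        obtain ⟨hh0, hh1, hhd⟩ := mem_Hnm.mp hh
        rcases eq_or_lt_of_le hh1 with hz | hz
        · have hh0pos : 0 < h 0 := by
            rcases eq_or_lt_of_le hh0 with hz0 | hz0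
            · exact absurd (vec_ext hz0.symm hz.symm) hne
            · exact hz0
          have : (n:ℤ) ∣ h 0 := by
            have he : h 0 = h 0 + (m₁:ℤ) * h 1 := by rw [← hz]; ring
            rw [he]; exact hhd
          have := Int.le_of_dvd hh0pos this
          have hm1k : (m₁:ℤ) * k ≥ 2 := by
            linarith [mul_le_mul_of_nonneg_left (show (1:ℤ) ≤ k by linarith)
              (show (0:ℤ) ≤ (m₁:ℤ) by linarith)]
          rw [hx0] at c0
          linarith
        · have hrpos : 0 < (n:ℤ) - m₁ * h 1 := by
            rw [hx1] at c1
            linarith [mul_le_mul_of_nonneg_left (show (1:ℤ) ≤ B - h 1 by linarith)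
              (show (0:ℤ) ≤ (m₁:ℤ) by linarith)]
          have hrlt : (n:ℤ) - m₁ * h 1 < n := by
            have hp := mul_pos (show (0:ℤ) < (m₁:ℤ) by linarith) hz
            linarith
          have hdd : (n:ℤ) ∣ h 0 - ((n:ℤ) - m₁ * h 1) := by
            have he : h 0 - ((n:ℤ) - m₁ * h 1) = (h 0 + (m₁:ℤ) * h 1) - n := by ring
            rw [he]
            exact dvd_sub hhd ⟨1, by ring⟩
          have := rep_le hdd hh0 hrpos hrlt
          rw [hx0] at c0
          rw [hx1] at c1
          linarith [mul_le_mul_of_nonneg_left (show (1:ℤ) ≤ k - h 1 by linarith)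
            (show (0:ℤ) ≤ (m₁:ℤ) by linarith)]
    · have hx1ge : B + M2 ≤ x 1 := by
        rw [hx1]
        linarith [mul_le_mul_of_nonneg_left (show (1:ℤ) ≤ A - j by linarith)
          (show (0:ℤ) ≤ M2 by linarith)]
      refine ⟨⟨by omega, by linarith, ?_⟩, ?_⟩
      · rw [hx0, hx1]
        obtain ⟨t, ht⟩ := hdvd
        refine ⟨m₁ - j * t, ?_⟩
        have he : j + (m₁:ℤ) * ((n:ℤ) - M2 * j) = (m₁:ℤ) * n - ((m₁:ℤ) * M2 - 1) * j := by
          ring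
        rw [he, ht]
        ring
      · intro h hh hne
        by_contra hc
        push_neg at hc
        obtain ⟨c0, c1⟩ := hc
        obtain ⟨hh0, hh1, hhd⟩ := mem_Hnm.mp hh
        have hd2 : (n:ℤ) ∣ M2 * h 0 + h 1 := by
          have he : M2 * h 0 + h 1 = M2 * (h 0 + (m₁:ℤ) * h 1) - ((m₁:ℤ) * M2 - 1) * h 1 := by
            ring
          rw [he]
          exact dvd_sub (hhd.mul_left _) (hdvd.mul_right _)
        rcases eq_or_lt_of_le hh0 with hz | hz
        · have hh1pos : 0 < h 1 := by
            rcases eq_or_lt_of_le hh1 with hz1 | hz1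
            · exact absurd (vec_ext hz.symm hz1.symm) hne
            · exact hz1
          have : (n:ℤ) ∣ h 1 := by
            have he : h 1 = M2 * h 0 + h 1 := by rw [← hz]; ring
            rw [he]; exact hd2
          have := Int.le_of_dvd hh1pos this
          rw [hx1] at c1
          linarith [mul_le_mul_of_nonneg_left (show (1:ℤ) ≤ j by linarith)
            (show (0:ℤ) ≤ M2 by linarith)]
        · have hrpos : 0 < (n:ℤ) - M2 * h 0 := by
            rw [hx0] at c0
            linarith [mul_le_mul_of_nonneg_left (show (1:ℤ) ≤ A - h 0 by linarith)
              (show (0:ℤ) ≤ M2 by linarith)]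
          have hrlt : (n:ℤ) - M2 * h 0 < n := by
            have hp := mul_pos (show (0:ℤ) < M2 by linarith) hz
            linarith
          have hdd : (n:ℤ) ∣ h 1 - ((n:ℤ) - M2 * h 0) := by
            have he : h 1 - ((n:ℤ) - M2 * h 0) = (M2 * h 0 + h 1) - n := by ring
            rw [he]
            exact dvd_sub hd2 ⟨1, by ring⟩
          have := rep_le hdd hh1 hrpos hrlt
          rw [hx0] at c0
          rw [hx1] at c1
          linarith [mul_le_mul_of_nonneg_left (show (1:ℤ) ≤ j - h 0 by linarith)
            (show (0:ℤ) ≤ M2 by linarith)]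


/-- For coprime `n > m₁ > 1`, `0 < m₂ < n` with `m₁m₂ ≡ 1 (mod n)`,
`c = (m₁m₂ - 1)/n`, and `c ∣ m₁ - 1`, `c ∣ m₂ - 1` (so that `H` is an AG semigroup):
`H = {(u₁,u₂) ∈ ℕ² : u₁ + m₁u₂ ≡ 0 (mod n)}` has a unique Ulrich element `v`, and this
`v` has strictly smaller degree than every other minimal generator of `ω_H`. -/
theorem unique_ulrich_element (n m₁ m₂ c : ℕ)
    (h1 : 1 < m₁) (h2 : m₁ < n) (hcop : Nat.Coprime n m₁)
    (hm₂pos : 0 < m₂) (hm₂lt : m₂ < n)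
    (hinv : m₁ * m₂ = n * c + 1)
    (hc₁ : c ∣ m₁ - 1) (hc₂ : c ∣ m₂ - 1) :
    (∃! v : Fin 2 → ℤ, IsUlrich2 n (Hnm n m₁) v) ∧
    (∀ v : Fin 2 → ℤ, IsUlrich2 n (Hnm n m₁) v →
      ∀ u : Fin 2 → ℤ, minGen 2 n (Hnm n m₁) u → u ≠ v → degZ v < degZ u) := by

  -- basic positivity facts
  have hnpos : 0 < n := by omega
  have hcpos : 0 < c := by
    rcases Nat.eq_zero_or_pos c with h | h
    · exfalso
      subst h
      rw [Nat.mul_zero, Nat.zero_add] at hinv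
      have : m₁ ≤ m₁ * m₂ := Nat.le_mul_of_pos_right _ hm₂pos
      omega
    · exact h
  have hm₂2 : 2 ≤ m₂ := by
    rcases Nat.lt_or_ge m₂ 2 with h | h
    · exfalso
      have hm₂1 : m₂ = 1 := by omega
      subst hm₂1
      rw [Nat.mul_one] at hinv
      have : n ≤ n * c := Nat.le_mul_of_pos_right _ hcpos
      omega
    · exact h
  obtain ⟨a, ha⟩ := hc₁
  obtain ⟨b, hb⟩ := hc₂
  have hapos : 0 < a := by
    rcases Nat.eq_zero_or_pos a with h | h
    · exfalso; subst h; simp at ha; omega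
    · exact h
  have hbpos : 0 < b := by
    rcases Nat.eq_zero_or_pos b with h | h
    · exfalso; subst h; simp at hb; omega
    · exact h
  have hM1 : 2 ≤ (m₁:ℤ) := by exact_mod_cast h1
  have hM2 : 2 ≤ (m₂:ℤ) := by exact_mod_cast hm₂2
  have hN : (0:ℤ) < n := by exact_mod_cast hnpos
  have hA : 1 ≤ (a:ℤ) := by exact_mod_cast hapos
  have hB : 1 ≤ (b:ℤ) := by exact_mod_cast hbpos
  have hCpos : (0:ℤ) < c := by exact_mod_cast hcpos
  have hinvZ : (m₁:ℤ) * m₂ = n * c + 1 := by exact_mod_cast hinv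
  have haZ : (m₁:ℤ) - 1 = c * a := by
    have h' : ((m₁ - 1 : ℕ) : ℤ) = ((c * a : ℕ) : ℤ) := congrArg (fun t : ℕ => (t:ℤ)) ha
    rw [Nat.cast_sub (by omega : 1 ≤ m₁)] at h'
    push_cast at h'
    linarith
  have hbZ : (m₂:ℤ) - 1 = c * b := by
    have h' : ((m₂ - 1 : ℕ) : ℤ) = ((c * b : ℕ) : ℤ) := congrArg (fun t : ℕ => (t:ℤ)) hb
    rw [Nat.cast_sub (by omega : 1 ≤ m₂)] at h'
    push_cast at h'
    linarith
  have hABN : (a:ℤ) + (m₁:ℤ) * b = n := by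
    have h' : (c:ℤ) * ((a:ℤ) + (m₁:ℤ) * b) = (c:ℤ) * n := by
      linear_combination (-1 : ℤ) * haZ - (m₁:ℤ) * hbZ + hinvZ
    exact mul_left_cancel₀ (ne_of_gt hCpos) h'
  have hM2A : (m₂:ℤ) * a + b = n := by
    have h' : (c:ℤ) * ((m₂:ℤ) * a + b) = (c:ℤ) * n := by
      linear_combination (-(m₂:ℤ)) * haZ - hbZ + hinvZ
    exact mul_left_cancel₀ (ne_of_gt hCpos) h'
  have hAM1 : (a:ℤ) ≤ (m₁:ℤ) - 1 := by
    have := mul_le_mul_of_nonneg_right (show (1:ℤ) ≤ (c:ℤ) by linarith)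
      (show (0:ℤ) ≤ (a:ℤ) by linarith)
    linarith
  have hdvdZ : (n:ℤ) ∣ (m₁:ℤ) * (m₂:ℤ) - 1 := ⟨c, by linarith⟩
  have hiff : ∀ x : Fin 2 → ℤ, minGen 2 n (Hnm n m₁) x ↔
      ((∃ k : ℤ, 1 ≤ k ∧ k ≤ (b:ℤ) ∧ x 0 = (n:ℤ) - m₁ * k ∧ x 1 = k) ∨
       (∃ j : ℤ, 1 ≤ j ∧ j ≤ (a:ℤ) - 1 ∧ x 0 = j ∧ x 1 = (n:ℤ) - m₂ * j)) :=
    fun x => mingen_iff hnpos hA hB hM1 hM2 hABN hM2A hdvdZ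
  set v : Fin 2 → ℤ := ![(a:ℤ), (b:ℤ)] with hvdef
  have hv0 : v 0 = (a:ℤ) := rfl
  have hv1 : v 1 = (b:ℤ) := rfl
  have hvmin : minGen 2 n (Hnm n m₁) v :=
    (hiff v).mpr (Or.inl ⟨(b:ℤ), hB, le_refl _, by rw [hv0]; linarith, hv1⟩)
  -- v is Ulrich
  have hUl : IsUlrich2 n (Hnm n m₁) v := by
    refine ⟨hvmin, fun x hx hxv => ?_⟩
    rcases (hiff x).mp hx with ⟨k, hk1, hk2, hx0, hx1⟩ | ⟨j, hj1, hj2, hx0, hx1⟩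
    · have hkB : k ≤ (b:ℤ) - 1 := by
        rcases lt_or_eq_of_le hk2 with h | h
        · linarith
        · exfalso
          exact hxv (vec_ext (by rw [hx0, hv0, h]; linarith) (by rw [hx1, hv1, h]))
      refine ⟨![(n:ℤ) - m₁ * ((b:ℤ) - k), (b:ℤ) - k],
        (hiff _).mpr (Or.inl ⟨(b:ℤ) - k, by linarith, by linarith, by simp, by simp⟩),
        0, ?_⟩
      refine vec_ext ?_ ?_
      · simp only [Pi.add_apply, Pi.single_apply, Matrix.cons_val_zero]
        norm_num
        rw [hx0, hv0]
        linarith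
      · simp only [Pi.add_apply, Pi.single_apply, Matrix.cons_val_one, Matrix.head_cons]
        norm_num
        rw [hx1, hv1]
        ring
    · refine ⟨![(a:ℤ) - j, (n:ℤ) - m₂ * ((a:ℤ) - j)],
        (hiff _).mpr (Or.inr ⟨(a:ℤ) - j, by linarith, by linarith, by simp, by simp⟩),
        1, ?_⟩
      refine vec_ext ?_ ?_
      · simp only [Pi.add_apply, Pi.single_apply, Matrix.cons_val_zero]
        norm_num
        rw [hx0, hv0]
        ring
      · simp only [Pi.add_apply, Pi.single_apply, Matrix.cons_val_one, Matrix.head_cons]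
        norm_num
        rw [hx1, hv1]
        linarith
  -- uniqueness
  have huniq : ∀ v' : Fin 2 → ℤ, IsUlrich2 n (Hnm n m₁) v' → v' = v := by
    rintro v' ⟨hv'min, hv'ul⟩
    by_contra hne
    obtain ⟨a', ha'min, i, heq⟩ := hv'ul v hvmin (fun h => hne h.symm)
    obtain ⟨ha'0, ha'1, -⟩ := (mem_omegaH hnpos).mp ha'min.1
    rcases (hiff v').mp hv'min with ⟨k, hk1, hk2, h00, h01⟩ | ⟨j, hj1, hj2, h00, h01⟩
    · have hkB : k ≤ (b:ℤ) - 1 := by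
        rcases lt_or_eq_of_le hk2 with h | h
        · linarith
        · exfalso
          exact hne (vec_ext (by rw [h00, hv0, h]; linarith) (by rw [h01, hv1, h]))
      fin_cases i
      · have hc1 := congrFun heq 1
        simp only [Pi.add_apply, Pi.single_apply] at hc1
        norm_num at hc1
        rw [hv1, h01] at hc1
        linarith
      · have hc0 := congrFun heq 0
        have hc1 := congrFun heq 1
        simp only [Pi.add_apply, Pi.single_apply] at hc0 hc1
        norm_num at hc0 hc1
        rw [hv0, h00] at hc0
        rw [hv1, h01] at hc1
        rcases (hiff a').mp ha'min with ⟨k', hk'1, hk'2, g0, g1⟩ | ⟨j', hj'1, hj'2, g0, g1⟩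
        · rw [g1] at hc1
          have h2b : 2 * (b:ℤ) ≤ (m₁:ℤ) * b := by
            linarith [mul_le_mul_of_nonneg_right hM1 (show (0:ℤ) ≤ (b:ℤ) by linarith)]
          linarith
        · rw [g0] at hc0
          have := mul_le_mul_of_nonneg_left (show (1:ℤ) ≤ (b:ℤ) - k by linarith)
            (show (0:ℤ) ≤ (m₁:ℤ) by linarith)
          linarith
    · fin_cases i
      · have hc0 := congrFun heq 0
        simp only [Pi.add_apply, Pi.single_apply] at hc0
        norm_num at hc0
        rw [hv0, h00] at hc0
        rcases (hiff a').mp ha'min with ⟨k', hk'1, hk'2, g0, g1⟩ | ⟨j', hj'1, hj'2, g0, g1⟩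
        · rw [g0] at hc0
          have := mul_le_mul_of_nonneg_left (show (1:ℤ) ≤ k' by linarith)
            (show (0:ℤ) ≤ (m₁:ℤ) by linarith)
          linarith
        · rw [g0] at hc0
          have := mul_le_mul_of_nonneg_left (show (1:ℤ) ≤ (b:ℤ) by linarith)
            (show (0:ℤ) ≤ (m₁:ℤ) by linarith)
          linarith
      · have hc0 := congrFun heq 0
        simp only [Pi.add_apply, Pi.single_apply] at hc0
        norm_num at hc0
        rw [hv0, h00] at hc0
        linarith
  refine ⟨⟨v, hUl, huniq⟩, ?_⟩
  -- degree claim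
  intro vv hvu u hu hne
  have hveq : vv = v := huniq vv hvu
  subst hveq
  have hdegv : degZ v = (a:ℤ) + b := by
    simp [degZ, Fin.sum_univ_two, hv0, hv1]
  rcases (hiff u).mp hu with ⟨k, hk1, hk2, hx0, hx1⟩ | ⟨j, hj1, hj2, hx0, hx1⟩
  · have hkB : k ≤ (b:ℤ) - 1 := by
      rcases lt_or_eq_of_le hk2 with h | h
      · linarith
      · exfalso
        exact hne (vec_ext (by rw [hx0, hv0, h]; linarith) (by rw [hx1, hv1, h]))
    have hdegu : degZ u = (n:ℤ) - m₁ * k + k := by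
      simp [degZ, Fin.sum_univ_two, hx0, hx1]
    rw [hdegv, hdegu]
    have := mul_le_mul_of_nonneg_left (show (1:ℤ) ≤ (b:ℤ) - k by linarith)
      (show (0:ℤ) ≤ (m₁:ℤ) - 1 by linarith)
    linarith
  · have hdegu : degZ u = j + ((n:ℤ) - m₂ * j) := by
      simp [degZ, Fin.sum_univ_two, hx0, hx1]
    rw [hdegv, hdegu]
    have := mul_le_mul_of_nonneg_left (show (1:ℤ) ≤ (a:ℤ) - j by linarith)
      (show (0:ℤ) ≤ (m₂:ℤ) - 1 by linarith)
    linarith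


end AGpaper
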